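/- arXiv:2412.17482 — 4 statements merged into one kernel-verified Lean document; each statement's English description precedes it below -/
import Mathlib

section
/- Consider the triangle with vertices 0, y₂, y₃ in ℝ^2 inscribed in a circle of radius r, with interior angles θ at 0 and φ at y₃ (so the angle at y₂ is π − θ − φ). Then the circumradius is r and the length of the longest side divided by 2 (the Čech birthtime of the 1-cycle formed by the three edges) equals r·max(sin θ, sin φ, sin(θ+φ)). Consequently the additive lifetime r·(1 − max(sin θ, sin φ, sin(θ+φ))) over all acute triangles with r ≤ 1 is maximized uniquely at θ = φ = π/3 and r = 1, with maximal value 1 − √3/2. -/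
/-!
By the law of sines in the circumcircle, each side of the triangle is `2 r` times the sine of the
opposite angle; the angle at `y₂` is `π - θ - φ`, whose sine is `sin (θ + φ)`. For the
optimisation, `sin` is increasing on `[0, π / 2]`, so for an acute triangle the largest of the
three sines is the sine of the largest angle, which is at least `π / 3` with equality only for
the equilateral triangle. Hence `max ≥ √3 / 2`, and `r * (1 - max) ≤ 1 - √3 / 2` with equality
exactly when the triangle is equilateral and `r = 1`.
-/

open Real EuclideanGeometry Set

namespace EuclideanGeometry

variable {V P : Type*} [NormedAddCommGroup V] [InnerProductSpace ℝ V] [MetricSpace P]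
  [NormedAddTorsor V P]

theorem abs_sin_oangle_eq_sin_angle [Fact (Module.finrank ℝ V = 2)] [Module.Oriented ℝ V (Fin 2)]
    {p p₁ p₂ : P} (hp₁ : p₁ ≠ p) (hp₂ : p₂ ≠ p) :
    |Real.Angle.sin (∡ p₁ p p₂)| = Real.sin (∠ p₁ p p₂) := by
  have hsin : 0 ≤ Real.sin (∠ p₁ p p₂) := sin_nonneg_of_nonneg_of_le_pi (angle_nonneg _ _ _)
    (angle_le_pi _ _ _)
  rcases oangle_eq_angle_or_eq_neg_angle hp₁ hp₂ with h | h <;>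
    simp only [h, Real.Angle.sin_neg, Real.Angle.sin_coe, abs_neg, abs_of_nonneg hsin]

theorem Sphere.dist_eq_two_mul_radius_mul_sin_angle [Fact (Module.finrank ℝ V = 2)]
    {s : Sphere P} {p₁ p₂ p₃ : P} (hp₁ : p₁ ∈ s) (hp₂ : p₂ ∈ s) (hp₃ : p₃ ∈ s)
    (hp₁p₂ : p₁ ≠ p₂) (hp₁p₃ : p₁ ≠ p₃) (hp₂p₃ : p₂ ≠ p₃) :
    dist p₁ p₃ = 2 * s.radius * Real.sin (∠ p₁ p₂ p₃) := by
  have : FiniteDimensional ℝ V := .of_fact_finrank_eq_two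
  have : Module.Oriented ℝ V (Fin 2) :=
    ⟨(Module.finBasisOfFinrankEq ℝ V Fact.out).orientation⟩
  have h := Sphere.dist_div_sin_oangle_eq_two_mul_radius hp₁ hp₂ hp₃ hp₁p₂ hp₁p₃ hp₂p₃
  rw [abs_sin_oangle_eq_sin_angle hp₁p₂ hp₂p₃.symm] at h
  by_cases hsin : Real.sin (∠ p₁ p₂ p₃) = 0
  · -- the junk value `x / 0 = 0` forces the radius to vanish, so `p₁ = s.center = p₃`
    rw [hsin, div_zero] at h
    have hr : s.radius = 0 := by linarith
    rw [mem_sphere, hr, dist_eq_zero] at hp₁ hp₃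
    exact absurd (hp₁.trans hp₃.symm) hp₁p₃
  · rw [← h, div_mul_cancel₀ _ hsin]

end EuclideanGeometry

theorem pi_div_three_le_max_of_add_add_eq_pi {a b c : ℝ} (h : a + b + c = π) :
    π / 3 ≤ max (max a b) c := by
  by_contra! hlt
  obtain ⟨⟨ha, hb⟩, hc⟩ := by simpa only [max_lt_iff] using hlt
  linarith

theorem max_eq_pi_div_three_iff_of_add_add_eq_pi {a b c : ℝ} (h : a + b + c = π) :
    max (max a b) c = π / 3 ↔ a = π / 3 ∧ b = π / 3 ∧ c = π / 3 := by
  constructor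
  · intro hmax
    have ha := hmax ▸ le_max_of_le_left (le_max_left a b)
    have hb := hmax ▸ le_max_of_le_left (le_max_right a b)
    have hc := hmax ▸ le_max_right (max a b) c
    refine ⟨?_, ?_, ?_⟩ <;> linarith
  · rintro ⟨rfl, rfl, rfl⟩
    simp

theorem sqrt_three_div_two_le_max_sin {a b c : ℝ} (ha : a ∈ Icc 0 (π / 2))
    (hb : b ∈ Icc 0 (π / 2)) (hc : c ∈ Icc 0 (π / 2)) (h : a + b + c = π) :
    √3 / 2 ≤ max (max (sin a) (sin b)) (sin c) ∧
      (max (max (sin a) (sin b)) (sin c) = √3 / 2 ↔ a = π / 3 ∧ b = π / 3 ∧ c = π / 3) := by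
  have hI : Icc 0 (π / 2) ⊆ Icc (-(π / 2)) (π / 2) :=
    Icc_subset_Icc (by linarith [pi_pos]) le_rfl
  have hmono := strictMonoOn_sin.mono hI
  have hab : max a b ∈ Icc 0 (π / 2) := ⟨le_max_of_le_left ha.1, max_le ha.2 hb.2⟩
  have hmax : max (max (sin a) (sin b)) (sin c) = sin (max (max a b) c) := by
    rw [hmono.monotoneOn.map_max hab hc, hmono.monotoneOn.map_max ha hb]
  have hthird : π / 3 ∈ Icc 0 (π / 2) := ⟨by positivity, by linarith [pi_pos]⟩
  have habc : max (max a b) c ∈ Icc 0 (π / 2) := ⟨le_max_of_le_right hc.1, max_le hab.2 hc.2⟩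
  rw [hmax, ← sin_pi_div_three, hmono.le_iff_le hthird habc, hmono.injOn.eq_iff habc hthird,
    max_eq_pi_div_three_iff_of_add_add_eq_pi h]
  exact ⟨pi_div_three_le_max_of_add_add_eq_pi h, Iff.rfl⟩

theorem mul_one_sub_le_one_sub {r m M : ℝ} (hr : r ≤ 1) (hm : m < 1) (hmM : m ≤ M)
    (hM : M ≤ 1) :
    r * (1 - M) ≤ 1 - m ∧ (r * (1 - M) = 1 - m ↔ M = m ∧ r = 1) := by
  have hle : r * (1 - M) ≤ 1 - M := by nlinarith
  refine ⟨by linarith, fun h => ?_, fun ⟨hMm, hr1⟩ => by rw [hMm, hr1, one_mul]⟩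
  have hMm : M = m := by linarith
  subst hMm
  exact ⟨rfl, by nlinarith⟩

theorem stmt_4 :
    -- law of sines / birthtime: half the longest side equals r·max(sin θ, sin φ, sin(θ+φ))
    (∀ (y₂ y₃ c : EuclideanSpace ℝ (Fin 2)) (r θ φ : ℝ),
      AffineIndependent ℝ ![(0 : EuclideanSpace ℝ (Fin 2)), y₂, y₃] →
      dist c (0 : EuclideanSpace ℝ (Fin 2)) = r → dist c y₂ = r → dist c y₃ = r →
      θ = ∠ y₂ (0 : EuclideanSpace ℝ (Fin 2)) y₃ →
      φ = ∠ (0 : EuclideanSpace ℝ (Fin 2)) y₃ y₂ →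
      max (max (dist (0 : EuclideanSpace ℝ (Fin 2)) y₂)
            (dist (0 : EuclideanSpace ℝ (Fin 2)) y₃)) (dist y₂ y₃) / 2
        = r * max (max (Real.sin θ) (Real.sin φ)) (Real.sin (θ + φ))) ∧
    -- the additive lifetime over acute triangles with r ≤ 1 is uniquely maximized
    -- at θ = φ = π/3 and r = 1, with maximal value 1 - √3/2
    (∀ r θ φ : ℝ, 0 < r → r ≤ 1 →
      0 < θ → θ < π / 2 → 0 < φ → φ < π / 2 →
      0 < π - θ - φ → π - θ - φ < π / 2 →
      r * (1 - max (max (Real.sin θ) (Real.sin φ)) (Real.sin (θ + φ)))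
          ≤ 1 - Real.sqrt 3 / 2 ∧
      (r * (1 - max (max (Real.sin θ) (Real.sin φ)) (Real.sin (θ + φ)))
          = 1 - Real.sqrt 3 / 2 ↔ θ = π / 3 ∧ φ = π / 3 ∧ r = 1)) := by
  have : Fact (Module.finrank ℝ (EuclideanSpace ℝ (Fin 2)) = 2) := ⟨finrank_euclideanSpace_fin⟩
  refine ⟨fun y₂ y₃ c r θ φ hind hc₁ hc₂ hc₃ hθ hφ => ?_,
    fun r θ φ _ hr hθ₀ hθ hφ₀ hφ hψ₀ hψ => ?_⟩
  · set o : EuclideanSpace ℝ (Fin 2) := 0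
    have hne : ∀ {i j : Fin 3}, i ≠ j → ![o, y₂, y₃] i ≠ ![o, y₂, y₃] j :=
      fun hij => hind.injective.ne hij
    have ho₂ : o ≠ y₂ := hne (by decide : (0 : Fin 3) ≠ 1)
    have ho₃ : o ≠ y₃ := hne (by decide : (0 : Fin 3) ≠ 2)
    have h₂₃ : y₂ ≠ y₃ := hne (by decide : (1 : Fin 3) ≠ 2)
    let s : Sphere (EuclideanSpace ℝ (Fin 2)) := ⟨c, r⟩
    have hos : o ∈ s := mem_sphere'.2 hc₁
    have hy₂s : y₂ ∈ s := mem_sphere'.2 hc₂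
    have hy₃s : y₃ ∈ s := mem_sphere'.2 hc₃
    have hψ : ∠ o y₂ y₃ = π - (θ + φ) := by
      have := angle_add_angle_add_angle_eq_pi y₃ ho₂.symm
      rw [hθ, hφ, angle_comm y₂ o y₃, angle_comm o y₃ y₂]
      linarith
    have hd₂₃ : dist y₂ y₃ = 2 * r * sin θ := hθ ▸
      s.dist_eq_two_mul_radius_mul_sin_angle hy₂s hos hy₃s ho₂.symm h₂₃ ho₃
    have hdo₂ : dist o y₂ = 2 * r * sin φ := hφ ▸
      s.dist_eq_two_mul_radius_mul_sin_angle hos hy₃s hy₂s ho₃ ho₂ h₂₃.symm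
    have hdo₃ : dist o y₃ = 2 * r * sin (θ + φ) := by
      rw [s.dist_eq_two_mul_radius_mul_sin_angle hos hy₂s hy₃s ho₂ ho₃ h₂₃, hψ, sin_pi_sub]
    have hr₀ : 0 ≤ 2 * r := by linarith [hc₁ ▸ dist_nonneg]
    rw [hdo₂, hdo₃, hd₂₃, ← mul_max_of_nonneg _ _ hr₀, ← mul_max_of_nonneg _ _ hr₀,
      max_comm, ← max_assoc]
    ring
  · have hsin : sin (θ + φ) = sin (π - θ - φ) := by rw [sub_sub, sin_pi_sub]
    obtain ⟨hge, hiff⟩ := sqrt_three_div_two_le_max_sin ⟨hθ₀.le, hθ.le⟩ ⟨hφ₀.le, hφ.le⟩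
      ⟨hψ₀.le, hψ.le⟩ (by ring)
    have hM : max (max (sin θ) (sin φ)) (sin (π - θ - φ)) ≤ 1 :=
      max_le (max_le (sin_le_one θ) (sin_le_one φ)) (sin_le_one _)
    have hsqrt : √3 / 2 < 1 := by
      rw [div_lt_one two_pos, sqrt_lt' two_pos]
      norm_num
    rw [hsin, (mul_one_sub_le_one_sub hr hsqrt hge hM).2, hiff]
    refine ⟨(mul_one_sub_le_one_sub hr hsqrt hge hM).1, ?_⟩
    constructor
    · rintro ⟨⟨rfl, rfl, -⟩, rfl⟩
      exact ⟨rfl, rfl, rfl⟩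
    · rintro ⟨rfl, rfl, rfl⟩
      exact ⟨⟨rfl, rfl, by ring⟩, rfl⟩
end

section
/- The maximal additive lifetime ℓ⁺_max for a 1-cycle formed by three points in ℝ^2 with circumradius at most 1 (Čech filtration) equals 1 − √3/2, and it is attained by an equilateral triangle inscribed in the unit circle (side length √3). -/
/-!
By the extended law of sines every side of a triangle is `2R` times the sine of the opposite
angle. In a non-obtuse triangle the largest angle lies in `[π/3, π/2]`, where the sine is at
least `sin (π/3) = √3/2`, so the longest side satisfies `L ≥ √3 R`. Hence
`R - L/2 ≤ R (1 - √3/2) ≤ 1 - √3/2`, with equality for the equilateral triangle inscribed in the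
unit circle.
-/

open Real EuclideanGeometry

theorem sqrt_three_div_two_le_max_sin_s5 {α β γ : ℝ} (hα : α ≤ π / 2) (hβ : β ≤ π / 2)
    (hγ : γ ≤ π / 2) (h : α + β + γ = π) : √3 / 2 ≤ max (max (sin α) (sin β)) (sin γ) := by
  rw [← sin_pi_div_three]
  have hmono {x : ℝ} (hx : x ≤ π / 2) (hx' : π / 3 ≤ x) : sin (π / 3) ≤ sin x :=
    sin_le_sin_of_le_of_le_pi_div_two (by linarith [pi_pos]) hx hx'
  rcases le_total (π / 3) α with hα' | hα'
  · exact le_max_of_le_left (le_max_of_le_left (hmono hα hα'))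
  rcases le_total (π / 3) β with hβ' | hβ'
  · exact le_max_of_le_left (le_max_of_le_right (hmono hβ hβ'))
  · exact le_max_of_le_right (hmono hγ (by linarith))

section

variable {V P : Type*} [NormedAddCommGroup V] [InnerProductSpace ℝ V] [MetricSpace P]
  [NormedAddTorsor V P]

theorem EuclideanGeometry.affineIndependent_of_angle_lt_pi_div_two {p₁ p₂ p₃ : P}
    (h₁ : ∠ p₂ p₁ p₃ < π / 2) (h₂ : ∠ p₁ p₂ p₃ < π / 2) (h₃ : ∠ p₁ p₃ p₂ < π / 2) :
    AffineIndependent ℝ ![p₁, p₂, p₃] := by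
  have h₁₂ : p₁ ≠ p₂ := by rintro rfl; simp at h₁
  have h₃₂ : p₃ ≠ p₂ := by rintro rfl; simp at h₂
  have hsum := angle_add_angle_add_angle_eq_pi p₃ h₁₂.symm
  rw [angle_comm p₂ p₃ p₁, angle_comm p₃ p₁ p₂] at hsum
  rw [affineIndependent_iff_not_collinear_set,
    collinear_iff_eq_or_eq_or_angle_eq_zero_or_angle_eq_pi]
  rintro (h | h | h | h)
  · exact h₁₂ h
  · exact h₃₂ h
  · linarith
  · linarith

theorem Affine.Simplex.circumradius_eq_of_dist_eq [FiniteDimensional ℝ V] {n : ℕ}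
    (s : Affine.Simplex ℝ P n) (hn : Module.finrank ℝ V = n) {p : P} {r : ℝ}
    (hr : ∀ i, dist (s.points i) p = r) : s.circumradius = r := by
  have hspan : affineSpan ℝ (Set.range s.points) = ⊤ := by
    rw [s.independent.affineSpan_eq_top_iff_card_eq_finrank_add_one, Fintype.card_fin, hn]
  exact (s.eq_circumradius_of_dist_eq (hspan ▸ AffineSubspace.mem_top ℝ V p) hr).symm

namespace Affine.Triangle

theorem dist_eq_two_mul_circumradius_mul_sin_angle (t : Affine.Triangle ℝ P)
    {i₁ i₂ i₃ : Fin 3} (h₁₂ : i₁ ≠ i₂) (h₁₃ : i₁ ≠ i₃) (h₂₃ : i₂ ≠ i₃) :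
    dist (t.points i₁) (t.points i₃) =
      2 * t.circumradius * sin (∠ (t.points i₁) (t.points i₂) (t.points i₃)) := by
  have h := t.dist_div_sin_angle_eq_two_mul_circumradius h₁₂ h₁₃ h₂₃
  have hR := t.circumradius_pos
  -- a vanishing sine would make the left side of `h` the junk value `d / 0 = 0`
  have hsin : sin (∠ (t.points i₁) (t.points i₂) (t.points i₃)) ≠ 0 := by
    intro hsin
    rw [hsin, div_zero] at h
    linarith
  rw [← h, div_mul_cancel₀ _ hsin]

theorem sqrt_three_mul_circumradius_le_max_dist (t : Affine.Triangle ℝ P)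
    (h₀ : ∠ (t.points 1) (t.points 0) (t.points 2) ≤ π / 2)
    (h₁ : ∠ (t.points 0) (t.points 1) (t.points 2) ≤ π / 2)
    (h₂ : ∠ (t.points 0) (t.points 2) (t.points 1) ≤ π / 2) :
    √3 * t.circumradius ≤ max (max (dist (t.points 0) (t.points 1))
      (dist (t.points 0) (t.points 2))) (dist (t.points 1) (t.points 2)) := by
  have hsum := angle_add_angle_add_angle_eq_pi (t.points 2)
    (t.independent.injective.ne (by decide : (1 : Fin 3) ≠ 0))
  rw [angle_comm (t.points 1), angle_comm (t.points 2)] at hsum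
  have h2R : 0 ≤ 2 * t.circumradius := by linarith [t.circumradius_nonneg]
  have hmax := sqrt_three_div_two_le_max_sin_s5 h₂ h₁ h₀ (by linarith)
  rw [t.dist_eq_two_mul_circumradius_mul_sin_angle (i₂ := 2) (by decide) (by decide) (by decide),
    t.dist_eq_two_mul_circumradius_mul_sin_angle (i₂ := 1) (by decide) (by decide) (by decide),
    t.dist_eq_two_mul_circumradius_mul_sin_angle (i₂ := 0) (by decide) (by decide) (by decide),
    ← mul_max_of_nonneg _ _ h2R, ← mul_max_of_nonneg _ _ h2R]
  calc √3 * t.circumradius = 2 * t.circumradius * (√3 / 2) := by ring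
    _ ≤ _ := mul_le_mul_of_nonneg_left hmax h2R

end Affine.Triangle

end

theorem EuclideanSpace.dist_toLp_fin_two (a b c d : ℝ) :
    dist !₂[a, b] !₂[c, d] = √((a - c) ^ 2 + (b - d) ^ 2) := by
  simp [EuclideanSpace.dist_eq, Fin.sum_univ_two, Real.dist_eq, sq_abs]

theorem stmt_5 :
    -- upper bound: every acute triangle with circumradius R ≤ 1 has additive
    -- lifetime R - L/2 ≤ 1 - √3/2, where L is the longest side
    (∀ (x₁ x₂ x₃ c : EuclideanSpace ℝ (Fin 2)) (R : ℝ),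
      dist c x₁ = R → dist c x₂ = R → dist c x₃ = R → R ≤ 1 →
      ∠ x₂ x₁ x₃ < π / 2 → ∠ x₁ x₂ x₃ < π / 2 → ∠ x₁ x₃ x₂ < π / 2 →
      R - max (max (dist x₁ x₂) (dist x₁ x₃)) (dist x₂ x₃) / 2
        ≤ 1 - Real.sqrt 3 / 2) ∧
    -- attained by an equilateral triangle of side √3 inscribed in the unit circle
    (∃ (x₁ x₂ x₃ c : EuclideanSpace ℝ (Fin 2)),
      dist c x₁ = 1 ∧ dist c x₂ = 1 ∧ dist c x₃ = 1 ∧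
      dist x₁ x₂ = Real.sqrt 3 ∧ dist x₁ x₃ = Real.sqrt 3 ∧ dist x₂ x₃ = Real.sqrt 3 ∧
      1 - max (max (dist x₁ x₂) (dist x₁ x₃)) (dist x₂ x₃) / 2
        = 1 - Real.sqrt 3 / 2) := by
  have hsqrt3 : √3 ^ 2 = 3 := sq_sqrt (by norm_num)
  refine ⟨fun x₁ x₂ x₃ c R h₁ h₂ h₃ hR hA hB hC => ?_, ?_⟩
  · let t : Affine.Triangle ℝ (EuclideanSpace ℝ (Fin 2)) :=
      ⟨![x₁, x₂, x₃], affineIndependent_of_angle_lt_pi_div_two hA hB hC⟩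
    have hcircum : t.circumradius = R := by
      refine t.circumradius_eq_of_dist_eq (p := c) finrank_euclideanSpace_fin fun i => ?_
      fin_cases i <;> simp only [t] <;> rwa [dist_comm]
    have hL : √3 * R ≤ max (max (dist x₁ x₂) (dist x₁ x₃)) (dist x₂ x₃) :=
      hcircum ▸ t.sqrt_three_mul_circumradius_le_max_dist hA.le hB.le hC.le
    have hsqrt3_le : √3 ≤ 2 := by nlinarith [sqrt_nonneg 3]
    calc R - max (max (dist x₁ x₂) (dist x₁ x₃)) (dist x₂ x₃) / 2
        ≤ R * (1 - √3 / 2) := by linarith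
      _ ≤ 1 - √3 / 2 := mul_le_of_le_one_left (by linarith) hR
  · refine ⟨!₂[1, 0], !₂[-1 / 2, √3 / 2], !₂[-1 / 2, -(√3 / 2)], !₂[0, 0], ?_⟩
    simp only [EuclideanSpace.dist_toLp_fin_two]
    ring_nf
    norm_num [hsqrt3]
end

section
/- The map T(r, τ, θ, φ) = −2r·(sin φ cos(τ+φ), sin φ sin(τ+φ), sin(θ+φ) cos(τ+θ+φ), sin(θ+φ) sin(τ+θ+φ)) from (0,∞) × [0,2π) × D to ℝ^4, where D = {(θ,φ) : 0 < θ < π/2, 0 < φ < π/2, 0 < π − θ − φ < π/2}, has Jacobian determinant with absolute value 16 r³ sin φ sin θ sin(θ+φ). -/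
/-!
With `α = τ + φ`, `β = τ + θ + φ` and `ψ = θ + φ`, expanding the explicit Jacobian determinant and
applying the angle-addition formulas twice gives
`16 r³ sin φ sin ψ (sin (β + ψ) cos (β + φ) - cos (β + ψ) sin (β + φ)) = 16 r³ sin φ sin ψ sin θ`.
On the domain all three sines are positive, so this is also the absolute value.
-/

open Real

/-- The parametrisation `T(r, τ, θ, φ)` of two vertices `(y₂, y₃) ∈ ℝ² × ℝ²` of a
triangle with third vertex at the origin, circumradius `r`, circumcenter direction `τ`,
and interior angles `θ` (at the origin) and `φ` (at `y₃`).
Coordinates: `x 0 = r`, `x 1 = τ`, `x 2 = θ`, `x 3 = φ`. -/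
noncomputable def Tmap : (Fin 4 → ℝ) → (Fin 4 → ℝ) := fun x =>
  ![-2 * x 0 * (Real.sin (x 3) * Real.cos (x 1 + x 3)),
    -2 * x 0 * (Real.sin (x 3) * Real.sin (x 1 + x 3)),
    -2 * x 0 * (Real.sin (x 2 + x 3) * Real.cos (x 1 + x 2 + x 3)),
    -2 * x 0 * (Real.sin (x 2 + x 3) * Real.sin (x 1 + x 2 + x 3))]

theorem Matrix.det_fin_four {R : Type*} [CommRing R] (A : Matrix (Fin 4) (Fin 4) R) :
    A.det =
      A 0 0 * (A 1 1 * (A 2 2 * A 3 3 - A 2 3 * A 3 2) - A 1 2 * (A 2 1 * A 3 3 - A 2 3 * A 3 1) +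
          A 1 3 * (A 2 1 * A 3 2 - A 2 2 * A 3 1)) -
        A 0 1 * (A 1 0 * (A 2 2 * A 3 3 - A 2 3 * A 3 2) - A 1 2 * (A 2 0 * A 3 3 - A 2 3 * A 3 0) +
          A 1 3 * (A 2 0 * A 3 2 - A 2 2 * A 3 0)) +
        A 0 2 * (A 1 0 * (A 2 1 * A 3 3 - A 2 3 * A 3 1) - A 1 1 * (A 2 0 * A 3 3 - A 2 3 * A 3 0) +
          A 1 3 * (A 2 0 * A 3 1 - A 2 1 * A 3 0)) -
        A 0 3 * (A 1 0 * (A 2 1 * A 3 2 - A 2 2 * A 3 1) - A 1 1 * (A 2 0 * A 3 2 - A 2 2 * A 3 0) +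
          A 1 2 * (A 2 0 * A 3 1 - A 2 1 * A 3 0)) := by
  have h₁ : (1 : Fin 4).succAbove 2 = 3 := rfl
  have h₂ : (2 : Fin 4).succAbove 2 = 3 := rfl
  have h₃ : (3 : Fin 4).succAbove 2 = 2 := rfl
  simp only [Matrix.det_succ_row_zero, Matrix.submatrix_apply, Fin.sum_univ_succ,
    Fin.succ_zero_eq_one, Fin.succ_one_eq_two, Fin.reduceSucc, Fin.zero_succAbove,
    Fin.succ_succAbove_zero, Fin.succ_succAbove_one, Fin.succ_succAbove_succ, Matrix.det_unique,
    Fin.default_eq_zero, Fin.val_zero, Fin.val_succ, Fin.val_eq_zero, h₁, h₂, h₃]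
  ring

-- The Jacobian matrix of `Tmap` at `(r, τ, θ, φ)` is `Tjac r (τ + φ) (τ + θ + φ) φ (θ + φ)`.
noncomputable def Tjac (r α β φ ψ : ℝ) : Matrix (Fin 4) (Fin 4) ℝ :=
  !![-2 * sin φ * cos α, 2 * r * sin φ * sin α, 0, -2 * r * cos (α + φ);
    -2 * sin φ * sin α, -2 * r * sin φ * cos α, 0, -2 * r * sin (α + φ);
    -2 * sin ψ * cos β, 2 * r * sin ψ * sin β, -2 * r * cos (β + ψ), -2 * r * cos (β + ψ);
    -2 * sin ψ * sin β, -2 * r * sin ψ * cos β, -2 * r * sin (β + ψ), -2 * r * sin (β + ψ)]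

theorem det_Tjac (r α β φ ψ : ℝ) :
    (Tjac r α β φ ψ).det = 16 * r ^ 3 * sin φ * sin ψ * sin (ψ - φ) := by
  calc (Tjac r α β φ ψ).det
      = 16 * r ^ 3 * sin φ * sin ψ *
          (sin (β + ψ) * (cos (α + φ) * cos (β - α) - sin (α + φ) * sin (β - α)) -
            cos (β + ψ) * (sin (α + φ) * cos (β - α) + cos (α + φ) * sin (β - α))) := by
        rw [Matrix.det_fin_four]
        simp only [Tjac, Matrix.of_apply, Matrix.cons_val', Matrix.cons_val_zero,
          Matrix.cons_val_fin_one, Matrix.cons_val_one, Matrix.cons_val, cos_sub, sin_sub]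
        ring
    _ = 16 * r ^ 3 * sin φ * sin ψ * (sin (β + ψ) * cos (β + φ) - cos (β + ψ) * sin (β + φ)) := by
        rw [← cos_add, ← sin_add, show α + φ + (β - α) = β + φ by ring]
    _ = 16 * r ^ 3 * sin φ * sin ψ * sin (ψ - φ) := by
        rw [← sin_sub, add_sub_add_left_eq_sub]

theorem hasFDerivAt_Tmap (x : Fin 4 → ℝ) :
    HasFDerivAt Tmap (Matrix.toLin'
      (Tjac (x 0) (x 1 + x 3) (x 1 + x 2 + x 3) (x 3) (x 2 + x 3))).toContinuousLinearMap x := by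
  have h := fun i : Fin 4 => hasFDerivAt_apply (𝕜 := ℝ) i x
  have hr := (h 0).const_mul (-2)
  refine hasFDerivAt_pi'.2 fun i => ?_
  fin_cases i <;> [
    refine (hr.mul ((h 3).sin.mul ((h 1).add (h 3)).cos)).congr_fderiv ?_;
    refine (hr.mul ((h 3).sin.mul ((h 1).add (h 3)).sin)).congr_fderiv ?_;
    refine (hr.mul (((h 2).add (h 3)).sin.mul (((h 1).add (h 2)).add (h 3)).cos)).congr_fderiv ?_;
    refine (hr.mul (((h 2).add (h 3)).sin.mul (((h 1).add (h 2)).add (h 3)).sin)).congr_fderiv ?_] <;>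
  · ext v
    simp only [Tjac, Pi.add_apply, Pi.mul_apply, add_apply, smul_apply, ContinuousLinearMap.proj_apply,
      ContinuousLinearMap.comp_apply, LinearMap.coe_toContinuousLinearMap', Matrix.toLin'_apply,
      Matrix.cons_mulVec, Matrix.empty_mulVec, dotProduct, Fin.sum_univ_four, Matrix.cons_val_zero,
      Matrix.cons_val_one, Matrix.cons_val, Fin.zero_eta, Fin.mk_one, Fin.reduceFinMk, Fin.isValue,
      smul_eq_mul, sin_add, cos_add]
    ring

theorem det_fderiv_Tmap (x : Fin 4 → ℝ) :
    LinearMap.det (fderiv ℝ Tmap x : (Fin 4 → ℝ) →ₗ[ℝ] (Fin 4 → ℝ)) =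
      16 * x 0 ^ 3 * sin (x 3) * sin (x 2) * sin (x 2 + x 3) := by
  rw [(hasFDerivAt_Tmap x).fderiv, LinearMap.coe_toContinuousLinearMap, LinearMap.det_toLin',
    det_Tjac, add_sub_cancel_right]
  ring

theorem stmt_6_general (x : Fin 4 → ℝ) (hr : 0 < x 0)
    (hθ : 0 < x 2) (hφ : 0 < x 3)
    (hsum : 0 < π - x 2 - x 3) :
    |LinearMap.det ((fderiv ℝ Tmap x : (Fin 4 → ℝ) →L[ℝ] (Fin 4 → ℝ)) :
        (Fin 4 → ℝ) →ₗ[ℝ] (Fin 4 → ℝ))| =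
      16 * (x 0) ^ 3 * Real.sin (x 3) * Real.sin (x 2) * Real.sin (x 2 + x 3) := by
  have hsinφ : 0 < sin (x 3) := sin_pos_of_pos_of_lt_pi hφ (by linarith)
  have hsinθ : 0 < sin (x 2) := sin_pos_of_pos_of_lt_pi hθ (by linarith)
  have hsinψ : 0 < sin (x 2 + x 3) := sin_pos_of_pos_of_lt_pi (by positivity) (by linarith)
  rw [det_fderiv_Tmap, abs_of_pos (by positivity)]

theorem stmt_6 (x : Fin 4 → ℝ) (hr : 0 < x 0)
    (hτ : x 1 ∈ Set.Ico 0 (2 * π))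
    (hθ : 0 < x 2) (hθ' : x 2 < π / 2) (hφ : 0 < x 3) (hφ' : x 3 < π / 2)
    (hsum : 0 < π - x 2 - x 3) (hsum' : π - x 2 - x 3 < π / 2) :
    |LinearMap.det ((fderiv ℝ Tmap x : (Fin 4 → ℝ) →L[ℝ] (Fin 4 → ℝ)) :
        (Fin 4 → ℝ) →ₗ[ℝ] (Fin 4 → ℝ))| =
      16 * (x 0) ^ 3 * Real.sin (x 3) * Real.sin (x 2) * Real.sin (x 2 + x 3) :=
  stmt_6_general x hr hθ hφ hsum
end

section
/- Define p(u) = ∫_{ℓ−u}^{ℓ} u·f(arcsin(1 − s/(1−uv))) / ( √(1 − (1 − s/(1−uv))²) · (1−uv)² ) ds, where ℓ = 1 − √3/2, v ∈ [0,1) is fixed, and f is smooth on (−π/2, π/2) with f(π/3) = 0 and f'(π/3) > 0. Then p is three times differentiable at 0 with p(0) = p'(0) = p''(0) = 0 and p'''(0) > 0. -/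
open Real Set MeasureTheory intervalIntegral

namespace Stmt19

noncomputable section

def L : ℝ := 1 - Real.sqrt 3 / 2

lemma sqrt3_lb : (1.72 : ℝ) < Real.sqrt 3 := by
  have h := Real.sq_sqrt (by norm_num : (3:ℝ) ≥ 0)
  nlinarith [Real.sqrt_nonneg 3]

lemma sqrt3_ub : Real.sqrt 3 < (1.74 : ℝ) := by
  have h := Real.sq_sqrt (by norm_num : (3:ℝ) ≥ 0)
  nlinarith [Real.sqrt_nonneg 3]

lemma L_lb : (13:ℝ)/100 < L := by unfold L; nlinarith [sqrt3_ub]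
lemma L_ub : L < (14:ℝ)/100 := by unfold L; nlinarith [sqrt3_lb]

def c (v u : ℝ) : ℝ := (1 - u * v)⁻¹
def c1 (v u : ℝ) : ℝ := v * c v u ^ 2
def c2 (v u : ℝ) : ℝ := 2 * v ^ 2 * c v u ^ 3
def aa (v u : ℝ) : ℝ := 1 - L * c v u
def bb (v u : ℝ) : ℝ := 1 - (L - u) * c v u
def a1 (v u : ℝ) : ℝ := -(L * c1 v u)
def b1 (v u : ℝ) : ℝ := c v u - (L - u) * c1 v u
def a2 (v u : ℝ) : ℝ := -(L * c2 v u)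
def b2 (v u : ℝ) : ℝ := 2 * c1 v u - (L - u) * c2 v u
def S (x : ℝ) : ℝ := Real.sqrt (1 - x ^ 2)
def A (v u : ℝ) : ℝ := Real.arcsin (aa v u)
def B (v u : ℝ) : ℝ := Real.arcsin (bb v u)
def A1 (v u : ℝ) : ℝ := a1 v u / S (aa v u)
def B1 (v u : ℝ) : ℝ := b1 v u / S (bb v u)
def A2 (v u : ℝ) : ℝ :=
  (a2 v u * S (aa v u) - a1 v u * (1 / (2 * S (aa v u)) * -(2 * aa v u * a1 v u))) / S (aa v u) ^ 2
def B2 (v u : ℝ) : ℝ :=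
  (b2 v u * S (bb v u) - b1 v u * (1 / (2 * S (bb v u)) * -(2 * bb v u * b1 v u))) / S (bb v u) ^ 2
def F (f : ℝ → ℝ) (t : ℝ) : ℝ := ∫ τ in (π/3)..t, f τ
def g (f : ℝ → ℝ) (v u : ℝ) : ℝ := F f (B v u) - F f (A v u)
def g1 (f : ℝ → ℝ) (v u : ℝ) : ℝ := f (B v u) * B1 v u - f (A v u) * A1 v u
def g2 (f : ℝ → ℝ) (v u : ℝ) : ℝ :=
  (deriv f (B v u) * B1 v u * B1 v u + f (B v u) * B2 v u) -
  (deriv f (A v u) * A1 v u * A1 v u + f (A v u) * A2 v u)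
def q (f : ℝ → ℝ) (v u : ℝ) : ℝ := u * c v u * g f v u
def q1 (f : ℝ → ℝ) (v u : ℝ) : ℝ :=
  (1 * c v u + u * c1 v u) * g f v u + u * c v u * g1 f v u
def q2 (f : ℝ → ℝ) (v u : ℝ) : ℝ :=
  ((1 * c1 v u + (1 * c1 v u + u * c2 v u)) * g f v u + (1 * c v u + u * c1 v u) * g1 f v u) +
  ((1 * c v u + u * c1 v u) * g1 f v u + u * c v u * g2 f v u)

variable {v u : ℝ}

/-! ### Bounds -/

lemma den_bounds (hv : v ∈ Set.Ico (0:ℝ) 1) (hu : |u| ≤ 1/100) :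
    (99:ℝ)/100 ≤ 1 - u * v ∧ 1 - u * v ≤ (101:ℝ)/100 := by
  obtain ⟨hv0, hv1⟩ := hv
  have h1 : u * v ≤ |u| * v := mul_le_mul_of_nonneg_right (le_abs_self u) hv0
  have h2 : -(|u| * v) ≤ u * v := by nlinarith [neg_abs_le u]
  have h3 : |u| * v ≤ 1/100 := by nlinarith [abs_nonneg u]
  constructor <;> nlinarith

lemma den_ne (hv : v ∈ Set.Ico (0:ℝ) 1) (hu : |u| ≤ 1/100) : (1 - u * v) ≠ 0 := by
  have := (den_bounds hv hu).1; intro h; rw [h] at this; norm_num at this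

lemma c_bounds (hv : v ∈ Set.Ico (0:ℝ) 1) (hu : |u| ≤ 1/100) :
    (100:ℝ)/101 ≤ c v u ∧ c v u ≤ (100:ℝ)/99 := by
  obtain ⟨h1, h2⟩ := den_bounds hv hu
  have hpos : (0:ℝ) < 1 - u * v := by linarith
  have hc : c v u * (1 - u * v) = 1 := inv_mul_cancel₀ (by linarith)
  have hcpos : 0 < c v u := by rw [c]; positivity
  constructor <;> nlinarith

lemma ab_bounds (hv : v ∈ Set.Ico (0:ℝ) 1) (hu : |u| ≤ 1/100) :
    (0 < aa v u ∧ aa v u < 1) ∧ (0 < bb v u ∧ bb v u < 1) := by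
  obtain ⟨hc1, hc2⟩ := c_bounds hv hu
  have hL1 := L_lb; have hL2 := L_ub
  have hu1 : -(1/100 : ℝ) ≤ u := (abs_le.1 hu).1
  have hu2 : u ≤ (1/100 : ℝ) := (abs_le.1 hu).2
  simp only [aa, bb]
  refine ⟨⟨?_, ?_⟩, ⟨?_, ?_⟩⟩ <;> nlinarith

lemma x_bounds (hv : v ∈ Set.Ico (0:ℝ) 1) (hu : |u| ≤ 1/100)
    {s : ℝ} (hs : s ∈ Set.uIcc (L - u) L) :
    0 < 1 - s * c v u ∧ 1 - s * c v u < 1 := by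
  obtain ⟨hc1, hc2⟩ := c_bounds hv hu
  have hL1 := L_lb; have hL2 := L_ub
  have hu1 : -(1/100 : ℝ) ≤ u := (abs_le.1 hu).1
  have hu2 : u ≤ (1/100 : ℝ) := (abs_le.1 hu).2
  have hs1 : L - 1/100 ≤ s ∧ s ≤ L + 1/100 := by
    rcases Set.mem_uIcc.1 hs with ⟨h1, h2⟩ | ⟨h1, h2⟩ <;> constructor <;> linarith
  obtain ⟨hs1, hs2⟩ := hs1
  constructor <;> nlinarith

lemma S_pos {x : ℝ} (h1 : 0 < x) (h2 : x < 1) : 0 < S x :=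
  Real.sqrt_pos.2 (by nlinarith)

lemma S_ne {x : ℝ} (h1 : 0 < x) (h2 : x < 1) : S x ≠ 0 := ne_of_gt (S_pos h1 h2)

lemma one_sub_sq_ne {x : ℝ} (h1 : 0 < x) (h2 : x < 1) : 1 - x ^ 2 ≠ 0 := by nlinarith

lemma arcsin_mem {x : ℝ} (h1 : 0 < x) (h2 : x < 1) :
    Real.arcsin x ∈ Set.Ioo (-(π/2)) (π/2) :=
  ⟨Real.neg_pi_div_two_lt_arcsin.2 (by linarith), Real.arcsin_lt_pi_div_two.2 h2⟩

lemma pi3_mem : π/3 ∈ Set.Ioo (-(π/2)) (π/2) := by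
  constructor <;> nlinarith [Real.pi_pos]

/-! ### antiderivative -/

section F

variable {f : ℝ → ℝ}

lemma hasD_F (hf : ContDiffOn ℝ (⊤ : ℕ∞) f (Set.Ioo (-(π/2)) (π/2))) {t : ℝ} (ht : t ∈ Set.Ioo (-(π/2)) (π/2)) : HasDerivAt (F f) (f t) t := by
  have hsub : Set.uIcc (π/3) t ⊆ Set.Ioo (-(π/2)) (π/2) :=
    (Set.ordConnected_Ioo).uIcc_subset pi3_mem ht
  have hint : IntervalIntegrable f volume (π/3) t :=
    (hf.continuousOn.mono hsub).intervalIntegrable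
  have hmeas := hf.continuousOn.stronglyMeasurableAtFilter isOpen_Ioo (μ := volume) t ht
  have hcont : ContinuousAt f t := hf.continuousOn.continuousAt (isOpen_Ioo.mem_nhds ht)
  exact intervalIntegral.integral_hasDerivAt_right hint hmeas hcont

/-! ### derivative chain -/

variable (hv : v ∈ Set.Ico (0:ℝ) 1) (hu : |u| ≤ 1/100)
include hv hu

lemma hasD_c : HasDerivAt (c v) (c1 v u) u := by
  have h : HasDerivAt (fun w => 1 - w * v) (-v) u := by
    simpa using ((hasDerivAt_id u).mul_const v).const_sub 1
  have h2 := h.inv (den_ne hv hu)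
  refine h2.congr_deriv (Eq.symm ?_)
  simp only [c1, c]
  field_simp

lemma hasD_c1 : HasDerivAt (c1 v) (c2 v u) u := by
  have h := ((hasD_c hv hu).pow 2).const_mul v
  refine h.congr_deriv (Eq.symm ?_)
  simp only [c1, c2]
  ring

lemma hasD_c2 : HasDerivAt (c2 v) (2 * v ^ 2 * (3 * c v u ^ 2 * c1 v u)) u := by
  have h := ((hasD_c hv hu).pow 3).const_mul (2 * v ^ 2)
  exact h.congr_deriv (by norm_num)

lemma hasD_aa : HasDerivAt (aa v) (a1 v u) u := by
  have h := ((hasD_c hv hu).const_mul L).const_sub 1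
  exact h

lemma hasD_bb : HasDerivAt (bb v) (b1 v u) u := by
  have hLu : HasDerivAt (fun w : ℝ => L - w) (-1) u := by
    simpa using (hasDerivAt_id u).const_sub L
  have h := (hLu.mul (hasD_c hv hu)).const_sub 1
  refine h.congr_deriv (Eq.symm ?_)
  simp only [b1]; ring

lemma hasD_a1 : HasDerivAt (a1 v) (a2 v u) u := by
  have h := ((hasD_c1 hv hu).const_mul L).neg
  exact h

lemma hasD_b1 : HasDerivAt (b1 v) (b2 v u) u := by
  have hLu : HasDerivAt (fun w : ℝ => L - w) (-1) u := by
    simpa using (hasDerivAt_id u).const_sub L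
  have h := (hasD_c hv hu).sub (hLu.mul (hasD_c1 hv hu))
  refine h.congr_deriv (Eq.symm ?_)
  simp only [b2]; ring

lemma hasD_b2 :
    HasDerivAt (b2 v)
      (2 * c2 v u - (-1 * c2 v u + (L - u) * (2 * v ^ 2 * (3 * c v u ^ 2 * c1 v u)))) u := by
  have hLu : HasDerivAt (fun w : ℝ => L - w) (-1) u := by
    simpa using (hasDerivAt_id u).const_sub L
  have h := ((hasD_c1 hv hu).const_mul 2).sub (hLu.mul (hasD_c2 hv hu))
  exact h

lemma hasD_Sbb :
    HasDerivAt (fun w => S (bb v w)) (1 / (2 * S (bb v u)) * -(2 * bb v u * b1 v u)) u := by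
  obtain ⟨_, hb0, hb1'⟩ := (ab_bounds hv hu)
  have hinner : HasDerivAt (fun w => 1 - bb v w ^ 2) (-(2 * bb v u * b1 v u)) u := by
    have := ((hasD_bb hv hu).pow 2).const_sub 1
    refine this.congr_deriv (Eq.symm ?_)
    ring
  have hsq := Real.hasDerivAt_sqrt (one_sub_sq_ne hb0 hb1')
  exact hsq.comp u hinner

lemma hasD_Saa :
    HasDerivAt (fun w => S (aa v w)) (1 / (2 * S (aa v u)) * -(2 * aa v u * a1 v u)) u := by
  obtain ⟨⟨ha0, ha1'⟩, _⟩ := (ab_bounds hv hu)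
  have hinner : HasDerivAt (fun w => 1 - aa v w ^ 2) (-(2 * aa v u * a1 v u)) u := by
    have := ((hasD_aa hv hu).pow 2).const_sub 1
    refine this.congr_deriv (Eq.symm ?_)
    ring
  have hsq := Real.hasDerivAt_sqrt (one_sub_sq_ne ha0 ha1')
  exact hsq.comp u hinner

lemma hasD_B : HasDerivAt (B v) (B1 v u) u := by
  obtain ⟨_, hb0, hb1'⟩ := (ab_bounds hv hu)
  have harc := Real.hasDerivAt_arcsin (by linarith) (ne_of_lt hb1')
  have h := harc.comp u (hasD_bb hv hu)
  refine h.congr_deriv (Eq.symm ?_)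
  simp only [B1, S]
  ring

lemma hasD_A : HasDerivAt (A v) (A1 v u) u := by
  obtain ⟨⟨ha0, ha1'⟩, _⟩ := (ab_bounds hv hu)
  have harc := Real.hasDerivAt_arcsin (by linarith) (ne_of_lt ha1')
  have h := harc.comp u (hasD_aa hv hu)
  refine h.congr_deriv (Eq.symm ?_)
  simp only [A1, S]
  ring

lemma hasD_B1 : HasDerivAt (B1 v) (B2 v u) u := by
  obtain ⟨_, hb0, hb1'⟩ := (ab_bounds hv hu)
  exact (hasD_b1 hv hu).div (hasD_Sbb hv hu) (S_ne hb0 hb1')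

lemma hasD_A1 : HasDerivAt (A1 v) (A2 v u) u := by
  obtain ⟨⟨ha0, ha1'⟩, _⟩ := (ab_bounds hv hu)
  exact (hasD_a1 hv hu).div (hasD_Saa hv hu) (S_ne ha0 ha1')

lemma A_mem : A v u ∈ Set.Ioo (-(π/2)) (π/2) := by
  obtain ⟨⟨ha0, ha1'⟩, _⟩ := (ab_bounds hv hu)
  exact arcsin_mem ha0 ha1'

lemma B_mem : B v u ∈ Set.Ioo (-(π/2)) (π/2) := by
  obtain ⟨_, hb0, hb1'⟩ := (ab_bounds hv hu)
  exact arcsin_mem hb0 hb1'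

lemma hasD_g (hf : ContDiffOn ℝ (⊤ : ℕ∞) f (Set.Ioo (-(π/2)) (π/2))) : HasDerivAt (g f v) (g1 f v u) u := by
  have hB := (hasD_F hf (B_mem hv hu)).comp u (hasD_B hv hu)
  have hA := (hasD_F hf (A_mem hv hu)).comp u (hasD_A hv hu)
  exact hB.sub hA

lemma hasD_fB (hf : ContDiffOn ℝ (⊤ : ℕ∞) f (Set.Ioo (-(π/2)) (π/2))) : HasDerivAt (fun w => f (B v w)) (deriv f (B v u) * B1 v u) u := by
  have hdf : DifferentiableAt ℝ f (B v u) :=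
    (hf.differentiableOn (by simp)).differentiableAt (isOpen_Ioo.mem_nhds (B_mem hv hu))
  exact hdf.hasDerivAt.comp u (hasD_B hv hu)

lemma hasD_fA (hf : ContDiffOn ℝ (⊤ : ℕ∞) f (Set.Ioo (-(π/2)) (π/2))) : HasDerivAt (fun w => f (A v w)) (deriv f (A v u) * A1 v u) u := by
  have hdf : DifferentiableAt ℝ f (A v u) :=
    (hf.differentiableOn (by simp)).differentiableAt (isOpen_Ioo.mem_nhds (A_mem hv hu))
  exact hdf.hasDerivAt.comp u (hasD_A hv hu)

lemma hasD_g1 (hf : ContDiffOn ℝ (⊤ : ℕ∞) f (Set.Ioo (-(π/2)) (π/2))) : HasDerivAt (g1 f v) (g2 f v u) u := by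
  have hB := (hasD_fB hv hu hf).mul (hasD_B1 hv hu)
  have hA := (hasD_fA hv hu hf).mul (hasD_A1 hv hu)
  exact hB.sub hA

lemma hasD_m : HasDerivAt (fun w => w * c v w) (1 * c v u + u * c1 v u) u :=
  (hasDerivAt_id u).mul (hasD_c hv hu)

lemma hasD_q (hf : ContDiffOn ℝ (⊤ : ℕ∞) f (Set.Ioo (-(π/2)) (π/2))) : HasDerivAt (q f v) (q1 f v u) u :=
  (hasD_m hv hu).mul (hasD_g hv hu hf)

lemma hasD_m1 :
    HasDerivAt (fun w => 1 * c v w + w * c1 v w) (1 * c1 v u + (1 * c1 v u + u * c2 v u)) u :=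
  ((hasD_c hv hu).const_mul 1).add ((hasDerivAt_id u).mul (hasD_c1 hv hu))

lemma hasD_q1 (hf : ContDiffOn ℝ (⊤ : ℕ∞) f (Set.Ioo (-(π/2)) (π/2))) : HasDerivAt (q1 f v) (q2 f v u) u :=
  ((hasD_m1 hv hu).mul (hasD_g hv hu hf)).add ((hasD_m hv hu).mul (hasD_g1 hv hu hf))

end F

/-! ### Values at `0` -/

lemma c_zero : c v 0 = 1 := by simp [c]
lemma c1_zero : c1 v 0 = v := by simp [c1, c]
lemma aa_zero : aa v 0 = Real.sqrt 3 / 2 := by simp [aa, c, L]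
lemma bb_zero : bb v 0 = Real.sqrt 3 / 2 := by simp [bb, c, L]
lemma a1_zero : a1 v 0 = -(L * v) := by simp [a1, c1, c]
lemma b1_zero : b1 v 0 = 1 - L * v := by simp [b1, c, c1]

lemma B_zero : B v 0 = π/3 := by
  rw [B, bb_zero, ← Real.sin_pi_div_three]
  exact Real.arcsin_sin (by nlinarith [Real.pi_pos]) (by nlinarith [Real.pi_pos])

lemma A_zero : A v 0 = π/3 := by
  rw [A, aa_zero, ← Real.sin_pi_div_three]
  exact Real.arcsin_sin (by nlinarith [Real.pi_pos]) (by nlinarith [Real.pi_pos])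

lemma S_sqrt3 : S (Real.sqrt 3 / 2) = 1/2 := by
  have h : (1:ℝ) - (Real.sqrt 3 / 2) ^ 2 = (1/2) ^ 2 := by
    rw [div_pow, Real.sq_sqrt (by norm_num : (3:ℝ) ≥ 0)]; norm_num
  rw [S, h, Real.sqrt_sq (by norm_num)]

lemma B1_zero : B1 v 0 = 2 * (1 - L * v) := by
  rw [B1, b1_zero, bb_zero, S_sqrt3]; ring

lemma A1_zero : A1 v 0 = -(2 * (L * v)) := by
  rw [A1, a1_zero, aa_zero, S_sqrt3]; ring

lemma g_zero {f : ℝ → ℝ} : g f v 0 = 0 := by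
  rw [g, B, A, aa_zero, bb_zero, sub_self]

lemma g1_zero {f : ℝ → ℝ} (hf0 : f (π/3) = 0) : g1 f v 0 = 0 := by
  rw [g1, B_zero, A_zero, hf0]; ring

lemma g2_zero {f : ℝ → ℝ} (hf0 : f (π/3) = 0) :
    g2 f v 0 = deriv f (π/3) * (4 - 8 * L * v) := by
  rw [g2, B_zero, A_zero, hf0, B1_zero, A1_zero]; ring

lemma q1_zero {f : ℝ → ℝ} (hf0 : f (π/3) = 0) : q1 f v 0 = 0 := by
  rw [q1, g_zero, g1_zero hf0]; ring

lemma q2_zero {f : ℝ → ℝ} (hf0 : f (π/3) = 0) : q2 f v 0 = 0 := by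
  rw [q2, g_zero, g1_zero hf0]; ring

/-! ### Third derivative at `0` -/

section main

variable {f : ℝ → ℝ}

lemma hasD_q2_at0 (hf : ContDiffOn ℝ (⊤ : ℕ∞) f (Set.Ioo (-(π/2)) (π/2)))
    (hf0 : f (π/3) = 0) (hv : v ∈ Set.Ico (0:ℝ) 1) :
    HasDerivAt (q2 f v) (3 * g2 f v 0) 0 := by
  have hu0 : |(0:ℝ)| ≤ 1/100 := by norm_num
  have hc := hasD_c hv hu0
  have hc1 := hasD_c1 hv hu0
  have hc2 := hasD_c2 hv hu0
  have hg := hasD_g hv hu0 hf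
  have hg1 := hasD_g1 hv hu0 hf
  -- differentiability of g2 at 0
  have hab := ab_bounds hv hu0
  obtain ⟨⟨ha0, ha1'⟩, hb0, hb1'⟩ := hab
  have hder : ContDiffOn ℝ (⊤ : ℕ∞) (deriv f) (Set.Ioo (-(π/2)) (π/2)) :=
    hf.deriv_of_isOpen isOpen_Ioo (by simp)
  have hdfB : DifferentiableAt ℝ (fun w => deriv f (B v w)) 0 := by
    have ddf : DifferentiableAt ℝ (deriv f) (B v 0) := by
      rw [B_zero]
      exact (hder.differentiableOn (by simp)).differentiableAt (isOpen_Ioo.mem_nhds pi3_mem)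
    exact ddf.comp 0 (hasD_B hv hu0).differentiableAt
  have hdfA : DifferentiableAt ℝ (fun w => deriv f (A v w)) 0 := by
    have ddf : DifferentiableAt ℝ (deriv f) (A v 0) := by
      rw [A_zero]
      exact (hder.differentiableOn (by simp)).differentiableAt (isOpen_Ioo.mem_nhds pi3_mem)
    exact ddf.comp 0 (hasD_A hv hu0).differentiableAt
  have hB2d : DifferentiableAt ℝ (B2 v) 0 := by
    show DifferentiableAt ℝ (fun w =>
      (b2 v w * S (bb v w) - b1 v w * (1 / (2 * S (bb v w)) * -(2 * bb v w * b1 v w))) /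
        S (bb v w) ^ 2) 0
    have hbbD := (hasD_bb hv hu0).differentiableAt
    have hb1D := (hasD_b1 hv hu0).differentiableAt
    have hb2D := (hasD_b2 hv hu0).differentiableAt
    have hSD := (hasD_Sbb hv hu0).differentiableAt
    have hSne : S (bb v 0) ≠ 0 := S_ne hb0 hb1'
    refine DifferentiableAt.div ?_ (hSD.pow 2) (by positivity)
    refine (hb2D.mul hSD).sub (hb1D.mul (DifferentiableAt.mul ?_ ?_))
    · exact (differentiableAt_const 1).div ((differentiableAt_const 2).mul hSD) (by
        simpa using hSne)
    · exact ((hbbD.const_mul 2).mul hb1D).neg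
  have hA2d : DifferentiableAt ℝ (A2 v) 0 := by
    show DifferentiableAt ℝ (fun w =>
      (a2 v w * S (aa v w) - a1 v w * (1 / (2 * S (aa v w)) * -(2 * aa v w * a1 v w))) /
        S (aa v w) ^ 2) 0
    have haaD := (hasD_aa hv hu0).differentiableAt
    have ha1D := (hasD_a1 hv hu0).differentiableAt
    have ha2D : DifferentiableAt ℝ (a2 v) 0 := by
      show DifferentiableAt ℝ (fun w => -(L * c2 v w)) 0
      exact ((hasD_c2 hv hu0).differentiableAt.const_mul L).neg
    have hSD := (hasD_Saa hv hu0).differentiableAt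
    have hSne : S (aa v 0) ≠ 0 := S_ne ha0 ha1'
    refine DifferentiableAt.div ?_ (hSD.pow 2) (by positivity)
    refine (ha2D.mul hSD).sub (ha1D.mul (DifferentiableAt.mul ?_ ?_))
    · exact (differentiableAt_const 1).div ((differentiableAt_const 2).mul hSD) (by
        simpa using hSne)
    · exact ((haaD.const_mul 2).mul ha1D).neg
  have hg2d : DifferentiableAt ℝ (g2 f v) 0 := by
    show DifferentiableAt ℝ (fun w =>
      (deriv f (B v w) * B1 v w * B1 v w + f (B v w) * B2 v w) -
      (deriv f (A v w) * A1 v w * A1 v w + f (A v w) * A2 v w)) 0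
    have hB1D := (hasD_B1 hv hu0).differentiableAt
    have hA1D := (hasD_A1 hv hu0).differentiableAt
    have hfB := (hasD_fB hv hu0 hf).differentiableAt
    have hfA := (hasD_fA hv hu0 hf).differentiableAt
    exact (((hdfB.mul hB1D).mul hB1D).add (hfB.mul hB2d)).sub
      (((hdfA.mul hA1D).mul hA1D).add (hfA.mul hA2d))
  have hg2' : HasDerivAt (g2 f v) (deriv (g2 f v) 0) 0 := hg2d.hasDerivAt
  have hm := hasD_m hv hu0
  have hm1 := hasD_m1 hv hu0
  have hm2 : HasDerivAt (fun w => 1 * c1 v w + (1 * c1 v w + w * c2 v w))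
      (1 * c2 v 0 + (1 * c2 v 0 + (1 * c2 v 0 + 0 * (2 * v ^ 2 * (3 * c v 0 ^ 2 * c1 v 0))))) 0 :=
    (hc1.const_mul 1).add ((hc1.const_mul 1).add ((hasDerivAt_id 0).mul hc2))
  have hQ2 := ((hm2.mul hg).add (hm1.mul hg1)).add ((hm1.mul hg1).add (hm.mul hg2'))
  refine hQ2.congr_deriv (Eq.symm ?_)
  rw [g_zero, g1_zero hf0, c_zero]
  ring

/-! ### `p = q` near `0` -/

lemma p_eq (hf : ContDiffOn ℝ (⊤ : ℕ∞) f (Set.Ioo (-(π/2)) (π/2)))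
    (hv : v ∈ Set.Ico (0:ℝ) 1) (hu : |u| ≤ 1/100) :
    (∫ s in (L - u)..L, u * f (Real.arcsin (1 - s / (1 - u * v))) /
      (Real.sqrt (1 - (1 - s / (1 - u * v)) ^ 2) * (1 - u * v) ^ 2)) = q f v u := by
  have hne := den_ne hv hu
  have hdiv : ∀ s : ℝ, s / (1 - u * v) = s * c v u := fun s => by
    rw [c, div_eq_mul_inv]
  have hkey : ∀ s ∈ Set.uIcc (L - u) L,
      HasDerivAt (fun s' => -(u * c v u) * F f (Real.arcsin (1 - s' * c v u)))
        (u * f (Real.arcsin (1 - s / (1 - u * v))) /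
          (Real.sqrt (1 - (1 - s / (1 - u * v)) ^ 2) * (1 - u * v) ^ 2)) s := by
    intro s hs
    obtain ⟨hx0, hx1⟩ := x_bounds hv hu hs
    have hxs : HasDerivAt (fun s' : ℝ => 1 - s' * c v u) (-(1 * c v u)) s := by
      simpa using ((hasDerivAt_id s).mul_const (c v u)).const_sub 1
    have harc := (Real.hasDerivAt_arcsin (by linarith) (ne_of_lt hx1)).comp s hxs
    have hFd := (hasD_F hf (arcsin_mem hx0 hx1)).comp s harc
    have h := hFd.const_mul (-(u * c v u))
    refine h.congr_deriv (Eq.symm ?_)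
    rw [hdiv]
    have hSpos : 0 < Real.sqrt (1 - (1 - s * c v u) ^ 2) := S_pos hx0 hx1
    have h1uv : (1 - u * v) ^ 2 ≠ 0 := pow_ne_zero 2 hne
    rw [c]
    field_simp
  have hcont : ContinuousOn (fun s => u * f (Real.arcsin (1 - s / (1 - u * v))) /
      (Real.sqrt (1 - (1 - s / (1 - u * v)) ^ 2) * (1 - u * v) ^ 2)) (Set.uIcc (L - u) L) := by
    have hinner : Continuous (fun s : ℝ => 1 - s / (1 - u * v)) := by fun_prop
    have harc : Continuous (fun s : ℝ => Real.arcsin (1 - s / (1 - u * v))) :=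
      Real.continuous_arcsin.comp hinner
    have hmap : Set.MapsTo (fun s : ℝ => Real.arcsin (1 - s / (1 - u * v)))
        (Set.uIcc (L - u) L) (Set.Ioo (-(π/2)) (π/2)) := by
      intro s hs
      obtain ⟨hx0, hx1⟩ := x_bounds hv hu hs
      show Real.arcsin (1 - s / (1 - u * v)) ∈ Set.Ioo (-(π/2)) (π/2)
      rw [hdiv]
      exact arcsin_mem hx0 hx1
    have hfc : ContinuousOn (fun s => f (Real.arcsin (1 - s / (1 - u * v))))
        (Set.uIcc (L - u) L) := hf.continuousOn.comp harc.continuousOn hmap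
    have hdenc : Continuous (fun s : ℝ =>
        Real.sqrt (1 - (1 - s / (1 - u * v)) ^ 2) * (1 - u * v) ^ 2) := by fun_prop
    refine (continuousOn_const.mul hfc).div hdenc.continuousOn ?_
    intro s hs
    obtain ⟨hx0, hx1⟩ := x_bounds hv hu hs
    have := S_pos hx0 hx1
    rw [S] at this
    rw [hdiv]
    positivity
  have heq := intervalIntegral.integral_eq_sub_of_hasDerivAt hkey hcont.intervalIntegrable
  rw [heq]
  simp only [q, g, A, B, aa, bb]
  ring

end main

end
end Stmt19

open Stmt19 in
theorem stmt_19 (f : ℝ → ℝ)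
    (hf : ContDiffOn ℝ (⊤ : ℕ∞) f (Set.Ioo (-(π / 2)) (π / 2)))
    (hf0 : f (π / 3) = 0) (hf1 : 0 < deriv f (π / 3))
    (v : ℝ) (hv : v ∈ Set.Ico (0 : ℝ) 1) :
    let ℓ : ℝ := 1 - Real.sqrt 3 / 2
    let p : ℝ → ℝ := fun u => ∫ s in (ℓ - u)..ℓ,
      u * f (Real.arcsin (1 - s / (1 - u * v))) /
        (Real.sqrt (1 - (1 - s / (1 - u * v)) ^ 2) * (1 - u * v) ^ 2)
    p 0 = 0 ∧ deriv p 0 = 0 ∧ deriv (deriv p) 0 = 0 ∧ 0 < deriv (deriv (deriv p)) 0 := by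
  intro ℓ p
  have hu0 : |(0:ℝ)| ≤ 1/100 := by norm_num
  have hU : Set.Ioo (-(1/100:ℝ)) (1/100) ∈ nhds (0:ℝ) :=
    Ioo_mem_nhds (by norm_num) (by norm_num)
  have habs : ∀ w ∈ Set.Ioo (-(1/100:ℝ)) (1/100), |w| ≤ 1/100 := fun w hw => by
    rw [abs_le]; exact ⟨le_of_lt hw.1, le_of_lt hw.2⟩
  have hpq : p =ᶠ[nhds 0] q f v :=
    Filter.eventually_of_mem hU (fun w hw => p_eq hf hv (habs w hw))
  have hd1 : deriv p =ᶠ[nhds 0] q1 f v :=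
    hpq.deriv.trans (Filter.eventually_of_mem hU fun w hw =>
      (hasD_q hv (habs w hw) hf).deriv)
  have hd2 : deriv (deriv p) =ᶠ[nhds 0] q2 f v :=
    hd1.deriv.trans (Filter.eventually_of_mem hU fun w hw =>
      (hasD_q1 hv (habs w hw) hf).deriv)
  refine ⟨?_, ?_, ?_, ?_⟩
  · rw [hpq.eq_of_nhds]
    simp [q, g_zero]
  · rw [hd1.eq_of_nhds]
    exact q1_zero hf0
  · rw [hd2.eq_of_nhds]
    exact q2_zero hf0
  · rw [hd2.deriv_eq, (hasD_q2_at0 hf hf0 hv).deriv, g2_zero hf0]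
    have hL1 := L_lb; have hL2 := L_ub
    obtain ⟨hv0, hv1⟩ := hv
    have hLv : L * v < 1/2 := by
      nlinarith [mul_le_mul hL2.le hv1.le hv0 (by linarith : (0:ℝ) ≤ 14/100)]
    have h4 : (0:ℝ) < 4 - 8 * L * v := by nlinarith
    positivity
end
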